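/- arXiv:1807.10456 — 3 statements merged into one kernel-verified Lean document; each statement's English description precedes it below -/
import Mathlib

section
/- If H is a linear 3-uniform hypergraph with m edges, then the minimum cardinality of a feedback vertex set of H is at most m/3. -/
/-- A hypergraph: a finite vertex set and a finite set of edges, each edge a
finset of vertices contained in the vertex set. -/
structure FinHypergraph (α : Type*) where
  verts : Finset α
  edges : Finset (Finset α)
  mem_verts : ∀ e ∈ edges, ∀ v ∈ e, v ∈ verts

namespace FinHypergraph

variable {α : Type*} [DecidableEq α]

/-- A cycle of length `k ≥ 2`: distinct vertices `v i`, distinct edges `e i`,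
with `{v i, v (i+1)} ⊆ e i` (indices mod `k`). -/
def IsCycle (H : FinHypergraph α) (k : ℕ) (v : ZMod k → α) (e : ZMod k → Finset α) : Prop :=
  2 ≤ k ∧ Function.Injective v ∧ Function.Injective e ∧
    (∀ i, e i ∈ H.edges) ∧ ∀ i, v i ∈ e i ∧ v (i + 1) ∈ e i

def HasCycle (H : FinHypergraph α) : Prop := ∃ k v e, H.IsCycle k v e

/-- There is a cycle using the edge `f`. -/
def HasCycleThrough (H : FinHypergraph α) (f : Finset α) : Prop :=
  ∃ k v e, H.IsCycle k v e ∧ ∃ i, e i = f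

/-- Delete a set of vertices together with all edges meeting it. -/
def delV (H : FinHypergraph α) (S : Finset α) : FinHypergraph α where
  verts := H.verts \ S
  edges := H.edges.filter fun e => ∀ x ∈ e, x ∉ S
  mem_verts := by
    intro e he x hx
    simp only [Finset.mem_filter] at he
    exact Finset.mem_sdiff.mpr ⟨H.mem_verts e he.1 x hx, he.2 x hx⟩

/-- Delete a set of edges (keeping all vertices). -/
def delE (H : FinHypergraph α) (A : Finset (Finset α)) : FinHypergraph α where
  verts := H.verts
  edges := H.edges \ A
  mem_verts := fun e he => H.mem_verts e (Finset.mem_sdiff.mp he).1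

/-- A feedback vertex set. -/
def IsFVS (H : FinHypergraph α) (S : Finset α) : Prop :=
  S ⊆ H.verts ∧ ¬ (H.delV S).HasCycle

/-- τ_c : minimum cardinality of a feedback vertex set. -/
noncomputable def fvsNum (H : FinHypergraph α) : ℕ :=
  sInf {n | ∃ S, H.IsFVS S ∧ S.card = n}

/-- A feedback edge set. -/
def IsFES (H : FinHypergraph α) (A : Finset (Finset α)) : Prop :=
  A ⊆ H.edges ∧ ¬ (H.delE A).HasCycle

/-- τ_c' : minimum cardinality of a feedback edge set. -/
noncomputable def fesNum (H : FinHypergraph α) : ℕ :=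
  sInf {n | ∃ A, H.IsFES A ∧ A.card = n}

/-- Two vertices are connected by an alternating vertex-edge walk. -/
def connRel (H : FinHypergraph α) (x y : α) : Prop :=
  Relation.ReflTransGen (fun a b => ∃ e ∈ H.edges, a ∈ e ∧ b ∈ e) x y

def Connected (H : FinHypergraph α) : Prop :=
  H.verts.Nonempty ∧ ∀ x ∈ H.verts, ∀ y ∈ H.verts, H.connRel x y

/-- The number of connected components. -/
noncomputable def numComponents (H : FinHypergraph α) : ℕ :=
  Nat.card (Quot fun x y : {a // a ∈ H.verts} => H.connRel x y)

/-- Every edge has exactly 3 vertices. -/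
def TriUniform (H : FinHypergraph α) : Prop := ∀ e ∈ H.edges, e.card = 3

/-- Any two distinct edges share at most one vertex. -/
def Linear (H : FinHypergraph α) : Prop :=
  ∀ e ∈ H.edges, ∀ f ∈ H.edges, e ≠ f → (e ∩ f).card ≤ 1

/-- The degree of a vertex: the number of edges containing it. -/
def degree (H : FinHypergraph α) (v : α) : ℕ :=
  (H.edges.filter fun e => v ∈ e).card

end FinHypergraph

/-!
Induction on the number of edges. Every step deletes a set `X` of vertices and discards a set `R`
of at least `3 |X|` edges, each of which meets `X` or is pendant when it is discarded: at most
one of its vertices lies on another surviving edge, so it lies on no cycle.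

A vertex of degree at least three is deleted on its own, and a pendant edge is discarded on its
own. An edge `u` with a vertex of degree one becomes pendant once a vertex of a neighbouring edge
`a` is deleted, which destroys `a` and one more edge. Otherwise every vertex has degree two; take a
shortest cycle `e 0, …, e (k - 1)`. Deleting every third cycle vertex destroys two thirds of the
cycle edges and leaves the others pendant. When `3 ∤ k` this falls one or two edges short, and
minimality of the cycle (no chords, and for `k ≥ 5` no edge off the cycle meets it twice) yields
one or two paths `e s, w, p` leaving the cycle: deleting the vertex of `w ∩ p` destroys `w` and
`p` and makes `e s` pendant. If two such paths end in the same edge `p`, they close a cycle of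
length six, which is handled directly.
-/

namespace FinHypergraph

variable {α : Type*}

section Cycles

variable {H : FinHypergraph α}

lemma HasCycle.mono {H' : FinHypergraph α} (h : H.edges ⊆ H'.edges) (hc : H.HasCycle) :
    H'.HasCycle := by
  obtain ⟨k, v, e, hk, hv, he, hmem, hinc⟩ := hc
  exact ⟨k, v, e, hk, hv, he, fun i => h (hmem i), hinc⟩

lemma TriUniform.anti {H' : FinHypergraph α} (h : H.edges ⊆ H'.edges) (hu : H'.TriUniform) :
    H.TriUniform :=
  fun e he => hu e (h he)

lemma exists_isCycle_of_nat {c : ℕ} (hc : 2 ≤ c) (u : ℕ → α) (g : ℕ → Finset α)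
    (hu : ∀ i < c, ∀ j < c, u i = u j → i = j) (hg : ∀ i < c, ∀ j < c, g i = g j → i = j)
    (hmem : ∀ i < c, g i ∈ H.edges) (hu_mem : ∀ i < c, u i ∈ g i)
    (hu_succ : ∀ i, i + 1 < c → u (i + 1) ∈ g i) (hclose : u 0 ∈ g (c - 1)) :
    ∃ v e, H.IsCycle c v e := by
  have : NeZero c := ⟨by omega⟩
  refine ⟨fun i => u i.val, fun i => g i.val, hc,
    fun i j h => ZMod.val_injective c (hu _ (ZMod.val_lt i) _ (ZMod.val_lt j) h),
    fun i j h => ZMod.val_injective c (hg _ (ZMod.val_lt i) _ (ZMod.val_lt j) h),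
    fun i => hmem _ (ZMod.val_lt i), fun i => ⟨hu_mem _ (ZMod.val_lt i), ?_⟩⟩
  have : Fact (1 < c) := ⟨hc⟩
  show u (i + 1).val ∈ g i.val
  rw [ZMod.val_add, ZMod.val_one]
  rcases Nat.lt_or_ge (i.val + 1) c with h | h
  · rw [Nat.mod_eq_of_lt h]
    exact hu_succ _ h
  · have hi : i.val = c - 1 := by have := ZMod.val_lt i; omega
    rw [show i.val + 1 = c by omega, Nat.mod_self, hi]
    exact hclose

def IsPendantIn (A : Finset (Finset α)) (f : Finset α) : Prop :=
  ∃ t, ∀ x ∈ f, x ≠ t → ∀ g ∈ A, x ∈ g → g = f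

lemma IsPendantIn.anti {A B : Finset (Finset α)} {f : Finset α} (hAB : A ⊆ B)
    (h : IsPendantIn B f) : IsPendantIn A f := by
  obtain ⟨t, ht⟩ := h
  exact ⟨t, fun x hx hxt g hg => ht x hx hxt g (hAB hg)⟩

lemma IsCycle.not_isPendantIn {k : ℕ} {v : ZMod k → α} {e : ZMod k → Finset α}
    (hc : H.IsCycle k v e) (i : ZMod k) {A : Finset (Finset α)}
    (hA : ∀ j, e j ≠ e i → e j ∈ A) : ¬ IsPendantIn A (e i) := by
  obtain ⟨hk, hv, he, -, hinc⟩ := hc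
  have : Fact (1 < k) := ⟨hk⟩
  rintro ⟨t, ht⟩
  have hprev : e (i - 1) ≠ e i := fun h => one_ne_zero (sub_eq_self.mp (he h))
  have hnext : e (i + 1) ≠ e i := fun h => one_ne_zero (add_eq_left.mp (he h))
  have hvi : v i ∈ e (i - 1) := by simpa using (hinc (i - 1)).2
  by_cases hti : v i = t
  · have hnt : v (i + 1) ≠ t := fun h =>
      one_ne_zero (add_eq_left.mp (hv (h.trans hti.symm)))
    exact hnext (ht _ (hinc i).2 hnt _ (hA _ hnext) (hinc (i + 1)).1)
  · exact hprev (ht _ (hinc i).1 hti _ (hA _ hprev) hvi)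

/-- A cycle of `H` whose vertices and edges are indexed periodically by `ℕ`. -/
structure PeriodicCycle (H : FinHypergraph α) where
  len : ℕ
  v : ℕ → α
  e : ℕ → Finset α
  two_le_len : 2 ≤ len
  e_mem : ∀ s, e s ∈ H.edges
  v_mem : ∀ s, v s ∈ e s
  v_succ_mem : ∀ s, v (s + 1) ∈ e s
  v_eq_v : ∀ s t, v s = v t ↔ s % len = t % len
  e_eq_e : ∀ s t, e s = e t ↔ s % len = t % len

structure ShortestCycle (H : FinHypergraph α) extends H.PeriodicCycle where
  not_isCycle : ∀ c < len, ∀ u g, ¬ H.IsCycle c u g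

theorem ShortestCycle.nonempty (h : H.HasCycle) : Nonempty H.ShortestCycle := by
  classical
  obtain ⟨v, e, hc⟩ := Nat.find_spec h
  have : NeZero (Nat.find h) := ⟨by have := hc.1; omega⟩
  exact ⟨{
    len := Nat.find h
    v := fun s => v s
    e := fun s => e s
    two_le_len := hc.1
    e_mem := fun s => hc.2.2.2.1 _
    v_mem := fun s => (hc.2.2.2.2 _).1
    v_succ_mem := fun s => by simpa using (hc.2.2.2.2 (s : ZMod (Nat.find h))).2
    v_eq_v := fun s t => hc.2.1.eq_iff.trans (ZMod.natCast_eq_natCast_iff' s t _)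
    e_eq_e := fun s t => hc.2.2.1.eq_iff.trans (ZMod.natCast_eq_natCast_iff' s t _)
    not_isCycle := fun c hc u g hcyc => Nat.find_min h hc ⟨u, g, hcyc⟩ }⟩

lemma eq_of_add_mod_eq_add_mod {k a i j : ℕ} (hi : i < k) (hj : j < k)
    (h : (a + i) % k = (a + j) % k) : i = j := by
  have := Nat.ModEq.add_left_cancel' a h
  rwa [Nat.ModEq, Nat.mod_eq_of_lt hi, Nat.mod_eq_of_lt hj] at this

namespace PeriodicCycle

variable (C : H.PeriodicCycle)

lemma e_add_inj {a i j : ℕ} (hi : i < C.len) (hj : j < C.len) (h : C.e (a + i) = C.e (a + j)) :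
    i = j :=
  eq_of_add_mod_eq_add_mod hi hj ((C.e_eq_e _ _).mp h)

lemma v_add_inj {a i j : ℕ} (hi : i < C.len) (hj : j < C.len) (h : C.v (a + i) = C.v (a + j)) :
    i = j :=
  eq_of_add_mod_eq_add_mod hi hj ((C.v_eq_v _ _).mp h)

lemma e_add_ne {a d : ℕ} (hd : 0 < d) (hdk : d < C.len) : C.e (a + d) ≠ C.e a := fun h =>
  absurd (C.e_add_inj (a := a) hdk (by omega) (by simpa using h)) hd.ne'

lemma e_ne_e_succ (s : ℕ) : C.e s ≠ C.e (s + 1) :=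
  (C.e_add_ne one_pos (by have := C.two_le_len; omega)).symm

lemma v_ne_v_succ (s : ℕ) : C.v s ≠ C.v (s + 1) := fun h =>
  absurd (C.v_add_inj (a := s) (i := 0) (j := 1) (by have := C.two_le_len; omega)
    (by have := C.two_le_len; omega) h) zero_ne_one

lemma e_add_len (s : ℕ) : C.e (s + C.len) = C.e s := (C.e_eq_e _ _).mpr (by simp)

lemma v_add_len (s : ℕ) : C.v (s + C.len) = C.v s := (C.v_eq_v _ _).mpr (by simp)

lemma exists_e_eq_e_add (a b : ℕ) : ∃ d < C.len, C.e b = C.e (a + d) := by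
  have hk : 0 < C.len := by have := C.two_le_len; omega
  refine ⟨(b + (C.len - a % C.len)) % C.len, Nat.mod_lt _ hk, (C.e_eq_e _ _).mpr ?_⟩
  have hmod := Nat.mod_add_div a C.len
  have hlt := Nat.mod_lt a hk
  have : a + (b + (C.len - a % C.len)) = b + C.len * (a / C.len + 1) := by
    rw [Nat.mul_succ]
    generalize C.len * (a / C.len) = m at hmod ⊢
    generalize a % C.len = r at hmod hlt ⊢
    omega
  rw [Nat.add_mod_mod, this, Nat.add_mul_mod_self_left]

end PeriodicCycle

end Cycles

variable [DecidableEq α]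

section Edges

variable {H : FinHypergraph α}

@[simp]
lemma mem_delV_edges {S e : Finset α} :
    e ∈ (H.delV S).edges ↔ e ∈ H.edges ∧ ∀ x ∈ e, x ∉ S :=
  Finset.mem_filter

@[simp]
lemma mem_delE_edges {A : Finset (Finset α)} {e : Finset α} :
    e ∈ (H.delE A).edges ↔ e ∈ H.edges ∧ e ∉ A :=
  Finset.mem_sdiff

lemma delV_edges_subset (S : Finset α) : (H.delV S).edges ⊆ H.edges :=
  Finset.filter_subset _ _

lemma Linear.anti {H' : FinHypergraph α} (h : H.edges ⊆ H'.edges) (hl : H'.Linear) :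
    H.Linear :=
  fun e he f hf => hl e (h he) f (h hf)

lemma Linear.eq_of_mem_of_mem (hl : H.Linear) {e f : Finset α} (he : e ∈ H.edges)
    (hf : f ∈ H.edges) (hef : e ≠ f) {x y : α} (hxe : x ∈ e) (hxf : x ∈ f) (hye : y ∈ e)
    (hyf : y ∈ f) : x = y :=
  Finset.card_le_one.mp (hl e he f hf hef) x (Finset.mem_inter.mpr ⟨hxe, hxf⟩) y
    (Finset.mem_inter.mpr ⟨hye, hyf⟩)

lemma exists_third_of_card_eq_three {e : Finset α} (he : e.card = 3) {x y : α} (hx : x ∈ e)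
    (hy : y ∈ e) (hxy : x ≠ y) : ∃ t ∈ e, t ≠ x ∧ t ≠ y ∧ ∀ z ∈ e, z = x ∨ z = y ∨ z = t := by
  have hy' : y ∈ e.erase x := Finset.mem_erase.mpr ⟨hxy.symm, hy⟩
  obtain ⟨t, ht⟩ := Finset.card_eq_one.mp (show ((e.erase x).erase y).card = 1 by
    rw [Finset.card_erase_of_mem hy', Finset.card_erase_of_mem hx, he])
  have hmem : ∀ z, z ∈ (e.erase x).erase y ↔ z ≠ y ∧ z ≠ x ∧ z ∈ e := by
    simp [Finset.mem_erase]
  obtain ⟨hty, htx, hte⟩ := (hmem t).mp (ht ▸ Finset.mem_singleton_self t)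
  refine ⟨t, hte, htx, hty, fun z hz => ?_⟩
  by_cases hzx : z = x
  · exact Or.inl hzx
  by_cases hzy : z = y
  · exact Or.inr (Or.inl hzy)
  exact Or.inr (Or.inr (Finset.mem_singleton.mp (ht ▸ (hmem z).mpr ⟨hzy, hzx, hz⟩)))

lemma exists_mem_ne_not_mem (hl : H.Linear) {f g : Finset α} (hf : f ∈ H.edges)
    (hg : g ∈ H.edges) (hfg : f ≠ g) (hf3 : f.card = 3) {t : α} (ht : t ∈ f) :
    ∃ z ∈ f, z ≠ t ∧ z ∉ g := by
  by_contra! h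
  have hsub : f.erase t ⊆ f ∩ g := fun z hz =>
    Finset.mem_inter.mpr ⟨Finset.mem_of_mem_erase hz, h z (Finset.mem_of_mem_erase hz)
      (Finset.ne_of_mem_erase hz)⟩
  have := Finset.card_le_card hsub
  rw [Finset.card_erase_of_mem ht, hf3] at this
  have := hl f hf g hg hfg
  omega

lemma eq_or_eq_of_degree_le_two {x : α} (hdeg : H.degree x ≤ 2) {g g' : Finset α}
    (hg : g ∈ H.edges) (hg' : g' ∈ H.edges) (hxg : x ∈ g) (hxg' : x ∈ g') (hne : g ≠ g')
    {h : Finset α} (hh : h ∈ H.edges) (hxh : x ∈ h) : h = g ∨ h = g' := by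
  by_contra! hc
  have hsub : ({g, g', h} : Finset (Finset α)) ⊆ H.edges.filter (x ∈ ·) := by
    intro a ha
    simp only [Finset.mem_insert, Finset.mem_singleton] at ha
    rcases ha with rfl | rfl | rfl <;> simp [*]
  have := Finset.card_le_card hsub
  rw [Finset.card_eq_three.mpr ⟨g, g', h, hne, Ne.symm hc.1, Ne.symm hc.2, rfl⟩] at this
  exact absurd hdeg (by unfold degree; omega)

lemma exists_partner (hdeg : ∀ x, H.degree x ≤ 2)
    (hcov : ∀ u ∈ H.edges, ∀ x ∈ u, ∃ g ∈ H.edges, x ∈ g ∧ g ≠ u) {u : Finset α}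
    (hu : u ∈ H.edges) {x : α} (hx : x ∈ u) :
    ∃ p ∈ H.edges, x ∈ p ∧ p ≠ u ∧ ∀ g ∈ H.edges, x ∈ g → g = u ∨ g = p := by
  obtain ⟨p, hp, hxp, hpu⟩ := hcov u hu x hx
  exact ⟨p, hp, hxp, hpu, fun g hg hxg =>
    eq_or_eq_of_degree_le_two (hdeg x) hu hp hx hxp hpu.symm hg hxg⟩

lemma isPendantIn_of_partners {A : Finset (Finset α)} (hA : A ⊆ H.edges) {f p q : Finset α}
    (hf : f.card = 3) {x y : α} (hx : x ∈ f) (hy : y ∈ f) (hxy : x ≠ y)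
    (hpx : ∀ g ∈ H.edges, x ∈ g → g = f ∨ g = p) (hqy : ∀ g ∈ H.edges, y ∈ g → g = f ∨ g = q)
    (hp : p ∉ A) (hq : q ∉ A) : IsPendantIn A f := by
  obtain ⟨t, -, -, -, hcov⟩ := exists_third_of_card_eq_three hf hx hy hxy
  refine ⟨t, fun z hz hzt g hg hzg => ?_⟩
  rcases hcov z hz with rfl | rfl | rfl
  · exact (hpx g (hA hg) hzg).resolve_right (by rintro rfl; exact hp hg)
  · exact (hqy g (hA hg) hzg).resolve_right (by rintro rfl; exact hq hg)
  · exact absurd rfl hzt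

end Edges

section Peeling

variable {H : FinHypergraph α}

/-- The edges still present when `f` is discarded, if the vertices of `X` are deleted first and
the edges of `R` are then discarded in order of increasing `ρ`. -/
def survivors (H : FinHypergraph α) (X : Finset α) (R : Finset (Finset α)) (ρ : Finset α → ℕ)
    (f : Finset α) : Finset (Finset α) :=
  (H.delV X).edges.filter fun g => g ∉ R ∨ ρ f ≤ ρ g

def Peels (H : FinHypergraph α) (X : Finset α) (R : Finset (Finset α)) (ρ : Finset α → ℕ)
    (f : Finset α) : Prop :=
  (∃ x ∈ f, x ∈ X) ∨ IsPendantIn (H.survivors X R ρ f) f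

variable {X : Finset α} {R : Finset (Finset α)} {ρ : Finset α → ℕ} {f g : Finset α}

lemma survivors_subset_delV : H.survivors X R ρ f ⊆ (H.delV X).edges :=
  Finset.filter_subset _ _

lemma survivors_subset : H.survivors X R ρ f ⊆ H.edges :=
  survivors_subset_delV.trans (delV_edges_subset X)

lemma not_mem_survivors_of_mem {x : α} (hxg : x ∈ g) (hxX : x ∈ X) :
    g ∉ H.survivors X R ρ f := fun h =>
  (mem_delV_edges.mp (Finset.mem_filter.mp h).1).2 x hxg hxX

lemma not_mem_survivors_of_lt (hg : g ∈ R) (hlt : ρ g < ρ f) : g ∉ H.survivors X R ρ f := by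
  simp only [survivors, Finset.mem_filter, not_and, not_or, not_not, not_le]
  exact fun _ => ⟨hg, hlt⟩

lemma peels_of_mem {x : α} (hxf : x ∈ f) (hxX : x ∈ X) : H.Peels X R ρ f :=
  Or.inl ⟨x, hxf, hxX⟩

theorem not_hasCycle_delV_union {S : Finset α} (hpeel : ∀ f ∈ R, H.Peels X R ρ f)
    (hS : ¬ (((H.delV X).delE R).delV S).HasCycle) : ¬ (H.delV (X ∪ S)).HasCycle := by
  classical
  rintro ⟨k, v, e, hc⟩
  have hmem : ∀ i, e i ∈ H.edges ∧ ∀ x ∈ e i, x ∉ X ∧ x ∉ S := fun i => by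
    simpa [not_or] using hc.2.2.2.1 i
  by_cases hR : ∃ i, e i ∈ R
  · -- an edge of the cycle in `R` of least rank would be pendant among the other cycle edges
    obtain ⟨i₀, hi₀⟩ := hR
    obtain ⟨f, hf, hmin⟩ := (R.filter fun g => ∃ i, e i = g).exists_min_image ρ
      ⟨e i₀, Finset.mem_filter.mpr ⟨hi₀, i₀, rfl⟩⟩
    obtain ⟨hfR, i, rfl⟩ := Finset.mem_filter.mp hf
    rcases hpeel _ hfR with ⟨x, hx, hxX⟩ | hpend
    · exact ((hmem i).2 x hx).1 hxX
    refine hc.not_isPendantIn i (fun j _ => ?_) hpend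
    simp only [survivors, Finset.mem_filter, mem_delV_edges]
    refine ⟨⟨(hmem j).1, fun x hx => ((hmem j).2 x hx).1⟩, ?_⟩
    by_cases hjR : e j ∈ R
    · exact Or.inr (hmin _ (Finset.mem_filter.mpr ⟨hjR, j, rfl⟩))
    · exact Or.inl hjR
  · push Not at hR
    refine hS ⟨k, v, e, hc.1, hc.2.1, hc.2.2.1, fun i => ?_, hc.2.2.2.2⟩
    simpa using ⟨⟨⟨(hmem i).1, fun x hx => ((hmem i).2 x hx).1⟩, hR i⟩,
      fun x hx => ((hmem i).2 x hx).2⟩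

def HasSmallFVS (H : FinHypergraph α) : Prop :=
  ∃ S : Finset α, ¬ (H.delV S).HasCycle ∧ 3 * S.card ≤ H.edges.card

theorem hasSmallFVS_of_peels (X : Finset α) (R : Finset (Finset α)) (ρ : Finset α → ℕ)
    (hR : R ⊆ H.edges) (hRne : R.Nonempty) (hcard : 3 * X.card ≤ R.card)
    (hpeel : ∀ f ∈ R, H.Peels X R ρ f)
    (IH : ∀ H' : FinHypergraph α, H'.edges ⊂ H.edges → H'.HasSmallFVS) : H.HasSmallFVS := by
  have hsub : ((H.delV X).delE R).edges ⊆ H.edges \ R := fun g hg => by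
    simp only [mem_delE_edges, mem_delV_edges] at hg
    exact Finset.mem_sdiff.mpr ⟨hg.1.1, hg.2⟩
  obtain ⟨S, hS, hSc⟩ := IH _ (hsub.trans_ssubset (Finset.sdiff_ssubset hR hRne))
  refine ⟨X ∪ S, not_hasCycle_delV_union hpeel hS, ?_⟩
  have := Finset.card_union_le X S
  have := Finset.card_le_card hsub
  have := Finset.card_sdiff_add_card_eq_card hR
  omega

end Peeling

section Reductions

variable {H : FinHypergraph α}

theorem hasSmallFVS_of_three_le_degree {v : α} (hv : 3 ≤ H.degree v)
    (IH : ∀ H' : FinHypergraph α, H'.edges ⊂ H.edges → H'.HasSmallFVS) : H.HasSmallFVS :=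
  hasSmallFVS_of_peels {v} (H.edges.filter (v ∈ ·)) (fun _ => 0) (Finset.filter_subset _ _)
    (Finset.card_pos.mp (by unfold degree at hv; omega)) (by simpa [degree] using hv)
    (fun _ hf => peels_of_mem (Finset.mem_filter.mp hf).2 (Finset.mem_singleton_self v)) IH

theorem hasSmallFVS_of_isPendantIn {f : Finset α} (hf : f ∈ H.edges)
    (hp : IsPendantIn H.edges f)
    (IH : ∀ H' : FinHypergraph α, H'.edges ⊂ H.edges → H'.HasSmallFVS) : H.HasSmallFVS :=
  hasSmallFVS_of_peels ∅ {f} (fun _ => 0) (by simpa) ⟨f, by simp⟩ (by simp)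
    (fun _ hg => Or.inr (((Finset.mem_singleton.mp hg).symm ▸ hp).anti survivors_subset)) IH

theorem hasSmallFVS_of_unique_edge (hu : H.TriUniform) (hl : H.Linear)
    (hdeg : ∀ x, H.degree x ≤ 2) (hnp : ∀ f ∈ H.edges, ¬ IsPendantIn H.edges f)
    {u : Finset α} (huE : u ∈ H.edges) {x : α} (hxu : x ∈ u)
    (hx : ∀ g ∈ H.edges, x ∈ g → g = u)
    (IH : ∀ H' : FinHypergraph α, H'.edges ⊂ H.edges → H'.HasSmallFVS) : H.HasSmallFVS := by
  obtain ⟨s, hsu, hsx, a, haE, hsa, hau⟩ : ∃ s ∈ u, s ≠ x ∧ ∃ a ∈ H.edges, s ∈ a ∧ a ≠ u := by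
    by_contra! h
    exact hnp u huE ⟨x, h⟩
  obtain ⟨s', hs'a, hs's, y, hyE, hs'y, hya⟩ :
      ∃ s' ∈ a, s' ≠ s ∧ ∃ y ∈ H.edges, s' ∈ y ∧ y ≠ a := by
    by_contra! h
    exact hnp a haE ⟨s, h⟩
  have hs'u : s' ∉ u := fun hs'u => hs's (hl.eq_of_mem_of_mem haE huE hau hs'a hs'u hsa hsu)
  have hyu : y ≠ u := by rintro rfl; exact hs'u hs'y
  refine hasSmallFVS_of_peels {s'} {a, y, u} (fun _ => 0) ?_ ⟨a, by simp⟩ ?_ ?_ IH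
  · intro g hg
    simp only [Finset.mem_insert, Finset.mem_singleton] at hg
    rcases hg with rfl | rfl | rfl <;> assumption
  · rw [Finset.card_eq_three.mpr ⟨a, y, u, hya.symm, hau, hyu, rfl⟩, Finset.card_singleton]
  · intro f hf
    simp only [Finset.mem_insert, Finset.mem_singleton] at hf
    rcases hf with rfl | rfl | rfl
    · exact peels_of_mem hs'a (Finset.mem_singleton_self s')
    · exact peels_of_mem hs'y (Finset.mem_singleton_self s')
    · exact Or.inr (isPendantIn_of_partners survivors_subset (hu f huE) hxu hsu hsx.symm
        (fun g hg hxg => Or.inl (hx g hg hxg))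
        (fun g hg hsg => eq_or_eq_of_degree_le_two (hdeg s) huE haE hsu hsa hau.symm hg hsg)
        (not_mem_survivors_of_mem hs'a (Finset.mem_singleton_self s'))
        (not_mem_survivors_of_mem hs'a (Finset.mem_singleton_self s')))

end Reductions

namespace PeriodicCycle

variable {H : FinHypergraph α} (C : H.PeriodicCycle)

lemma three_le_len (hl : H.Linear) : 3 ≤ C.len := by
  by_contra h
  have h2 : C.len = 2 := by have := C.two_le_len; omega
  have hv0 : C.v 0 ∈ C.e 1 := (C.v_eq_v 2 0).mpr (by simp [h2]) ▸ C.v_succ_mem 1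
  exact C.v_ne_v_succ 0 (hl.eq_of_mem_of_mem (C.e_mem 0) (C.e_mem 1) (C.e_ne_e_succ 0)
    (C.v_mem 0) hv0 (C.v_succ_mem 0) (C.v_mem 1))

def edgeFinset : Finset (Finset α) := (Finset.range C.len).image C.e

lemma e_mem_edgeFinset (s : ℕ) : C.e s ∈ C.edgeFinset :=
  Finset.mem_image.mpr ⟨s % C.len, Finset.mem_range.mpr (Nat.mod_lt _ (by
    have := C.two_le_len; omega)), (C.e_eq_e _ _).mpr (Nat.mod_mod _ _)⟩

lemma edgeFinset_subset : C.edgeFinset ⊆ H.edges := by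
  intro g hg
  obtain ⟨s, -, rfl⟩ := Finset.mem_image.mp hg
  exact C.e_mem s

lemma card_edgeFinset : C.edgeFinset.card = C.len := by
  rw [edgeFinset, Finset.card_image_of_injOn, Finset.card_range]
  intro s hs t ht h
  simpa using C.e_add_inj (a := 0) (Finset.mem_range.mp hs) (Finset.mem_range.mp ht)
    (by simpa using h)

lemma not_mem_edgeFinset {g : Finset α} (hg : ∀ j, g ≠ C.e j) : g ∉ C.edgeFinset := by
  intro h
  obtain ⟨s, -, rfl⟩ := Finset.mem_image.mp h
  exact hg s rfl

def sweepSet (m r : ℕ) : Finset α := (Finset.range r).image fun i => C.v (m + 3 * i + 2)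

lemma v_mem_sweepSet {m r i s : ℕ} (hi : i < r) (hs : s = m + 3 * i + 2) :
    C.v s ∈ C.sweepSet m r :=
  Finset.mem_image.mpr ⟨i, Finset.mem_range.mpr hi, hs ▸ rfl⟩

lemma card_sweepSet_le (m r : ℕ) : (C.sweepSet m r).card ≤ r :=
  Finset.card_image_le.trans (Finset.card_range r).le

lemma v_mem_sweepSet_first {m r : ℕ} (hr : 1 ≤ r) : C.v (m + 2) ∈ C.sweepSet m r :=
  C.v_mem_sweepSet (i := 0) hr rfl

lemma v_mem_sweepSet_last {m r : ℕ} (hk : C.len = 3 * r + m) (hr : 1 ≤ r) :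
    C.v (0 + C.len - 1) ∈ C.sweepSet m r :=
  C.v_mem_sweepSet (i := r - 1) (by omega) (by omega)

variable {C} (hdeg : ∀ x, H.degree x ≤ 2)
include hdeg

lemma edges_of_v_succ (s : ℕ) :
    ∀ g ∈ H.edges, C.v (s + 1) ∈ g → g = C.e s ∨ g = C.e (s + 1) :=
  fun _ hg hx => eq_or_eq_of_degree_le_two (hdeg _) (C.e_mem s) (C.e_mem (s + 1))
    (C.v_succ_mem s) (C.v_mem (s + 1)) (C.e_ne_e_succ s) hg hx

lemma edges_of_v (s : ℕ) :
    ∀ g ∈ H.edges, C.v s ∈ g → g = C.e s ∨ g = C.e (s + C.len - 1) := by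
  intro g hg hx
  have h := C.edges_of_v_succ hdeg (s + C.len - 1) g hg
  rw [show s + C.len - 1 + 1 = s + C.len by have := C.two_le_len; omega, C.v_add_len,
    C.e_add_len] at h
  exact (h hx).symm

lemma v_not_mem_outer {f : Finset α} (hf : f ∈ H.edges) (hfC : ∀ j, f ≠ C.e j) (s : ℕ) :
    C.v s ∉ f := fun h => by
  rcases C.edges_of_v hdeg s f hf h with h' | h' <;> exact hfC _ h'

variable (hu : H.TriUniform)
include hu

lemma isPendantIn_e_succ {A : Finset (Finset α)} (hA : A ⊆ H.edges) (s : ℕ) (hs : C.e s ∉ A)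
    (hs' : C.e (s + 2) ∉ A) : IsPendantIn A (C.e (s + 1)) :=
  isPendantIn_of_partners hA (hu _ (C.e_mem _)) (C.v_mem (s + 1)) (C.v_succ_mem (s + 1))
    (C.v_ne_v_succ _) (fun g hg hx => (C.edges_of_v_succ hdeg s g hg hx).symm)
    (C.edges_of_v_succ hdeg (s + 1)) hs hs'

/-- Deleting `v (m + 3i + 2)` for `i < r` destroys `e (m + 3i + 1)` and `e (m + 3i + 2)` and
leaves `e (m + 3i + 3)` pendant. -/
lemma peels_of_sweep {m r : ℕ} (hk : C.len = 3 * r + m) {X : Finset α}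
    (hX : C.sweepSet m r ⊆ X) {A : Finset (Finset α)} (hA : A ⊆ (H.delV X).edges) {j : ℕ}
    (hmj : m < j) (hjk : j < C.len) : (∃ x ∈ C.e j, x ∈ X) ∨ IsPendantIn A (C.e j) := by
  have hdead : ∀ {g : Finset α} {x : α}, x ∈ g → x ∈ X → g ∉ A := fun hxg hxX hg =>
    (mem_delV_edges.mp (hA hg)).2 _ hxg hxX
  obtain ⟨i, hj | hj | hj⟩ : ∃ i, j = m + 3 * i + 1 ∨ j = m + 3 * i + 2 ∨ j = m + 3 * i + 3 :=
    ⟨(j - m - 1) / 3, by omega⟩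
  · exact Or.inl ⟨_, C.v_succ_mem j, hX (C.v_mem_sweepSet (i := i) (by omega) (by omega))⟩
  · exact Or.inl ⟨_, C.v_mem j, hX (C.v_mem_sweepSet (i := i) (by omega) hj)⟩
  · obtain rfl : j = m + 3 * i + 2 + 1 := hj
    exact Or.inr (C.isPendantIn_e_succ hdeg hu (hA.trans (delV_edges_subset X)) _
      (hdead (C.v_mem _) (hX (C.v_mem_sweepSet (by omega) rfl)))
      (hdead (C.v_succ_mem _) (hX (C.v_mem_sweepSet (i := i + 1) (by omega) (by omega)))))

theorem hasSmallFVS_of_sweep {m r : ℕ} (hk : C.len = 3 * r + m) (Y : Finset α)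
    (O : Finset (Finset α)) (ρ : Finset α → ℕ) (hO : O ⊆ H.edges) (hOC : ∀ g ∈ O, ∀ j, g ≠ C.e j)
    (hOY : ∀ g ∈ O, ∃ y ∈ g, y ∈ Y) (hcard : 3 * Y.card ≤ O.card + m)
    (hspecial : ∀ j ≤ m, H.Peels (Y ∪ C.sweepSet m r) (O ∪ C.edgeFinset) ρ (C.e j))
    (IH : ∀ H' : FinHypergraph α, H'.edges ⊂ H.edges → H'.HasSmallFVS) : H.HasSmallFVS := by
  refine hasSmallFVS_of_peels (Y ∪ C.sweepSet m r) (O ∪ C.edgeFinset) ρ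
    (Finset.union_subset hO C.edgeFinset_subset)
    ⟨C.e 0, Finset.mem_union_right _ (C.e_mem_edgeFinset 0)⟩ ?_ ?_ IH
  · have hdisj : Disjoint O C.edgeFinset :=
      Finset.disjoint_left.mpr fun g hg => C.not_mem_edgeFinset (hOC g hg)
    rw [Finset.card_union_of_disjoint hdisj, C.card_edgeFinset]
    have := Finset.card_union_le Y (C.sweepSet m r)
    have := C.card_sweepSet_le m r
    omega
  · intro f hf
    rcases Finset.mem_union.mp hf with hf | hf
    · obtain ⟨y, hyf, hyY⟩ := hOY f hf
      exact peels_of_mem hyf (Finset.mem_union_left _ hyY)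
    obtain ⟨j, hj, rfl⟩ := Finset.mem_image.mp hf
    rcases le_or_gt j m with hjm | hjm
    · exact hspecial j hjm
    · exact C.peels_of_sweep hdeg hu hk Finset.subset_union_right survivors_subset_delV hjm
        (Finset.mem_range.mp hj)

theorem hasSmallFVS_of_len_eq_three_mul {r : ℕ} (hk : C.len = 3 * r)
    (IH : ∀ H' : FinHypergraph α, H'.edges ⊂ H.edges → H'.HasSmallFVS) : H.HasSmallFVS := by
  have hr : 1 ≤ r := by have := C.two_le_len; omega
  refine C.hasSmallFVS_of_sweep hdeg hu (m := 0) hk ∅ ∅ (fun _ => 0) (by simp) (by simp)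
    (by simp) (by simp) (fun j hj => ?_) IH
  obtain rfl : j = 0 := by omega
  exact Or.inr (isPendantIn_of_partners survivors_subset (hu _ (C.e_mem 0)) (C.v_mem 0)
    (C.v_succ_mem 0) (C.v_ne_v_succ 0) (C.edges_of_v hdeg 0) (C.edges_of_v_succ hdeg 0)
    (not_mem_survivors_of_mem (C.v_mem _) (Finset.mem_union_right _ (C.v_mem_sweepSet_last hk hr)))
    (not_mem_survivors_of_mem (C.v_succ_mem 1)
      (Finset.mem_union_right _ (C.v_mem_sweepSet_first hr))))

/-- The edges `e 0, e 1, e 2, w₂, p, w₀` form a cycle of length six. -/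
theorem hasSmallFVS_of_hexagon (hk : 3 ≤ C.len) {t₀ t₂ z₁ z₃ : α} {w₀ w₂ p : Finset α}
    (hw₀ : w₀ ∈ H.edges) (hw₂ : w₂ ∈ H.edges) (hp : p ∈ H.edges) (hw₀C : ∀ j, w₀ ≠ C.e j)
    (hw₂C : ∀ j, w₂ ≠ C.e j) (hpC : ∀ j, p ≠ C.e j) (hw₀p : w₀ ≠ p) (hw₂p : w₂ ≠ p)
    (hw₀w₂ : w₀ ≠ w₂)
    (ht₀ : t₀ ∈ C.e 0) (ht₀v : t₀ ≠ C.v 1) (ht₀part : ∀ g ∈ H.edges, t₀ ∈ g → g = C.e 0 ∨ g = w₀)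
    (ht₂w : t₂ ∈ w₂) (ht₂part : ∀ g ∈ H.edges, t₂ ∈ g → g = C.e 2 ∨ g = w₂)
    (hz₁w : z₁ ∈ w₀) (hz₁p : z₁ ∈ p) (hz₃w : z₃ ∈ w₂) (hz₃t : z₃ ≠ t₂)
    (hz₃part : ∀ g ∈ H.edges, z₃ ∈ g → g = w₂ ∨ g = p)
    (IH : ∀ H' : FinHypergraph α, H'.edges ⊂ H.edges → H'.HasSmallFVS) : H.HasSmallFVS := by
  have hv₂ : C.v 2 ∈ C.e 1 := C.v_succ_mem 1
  have hcyc : ({C.e 0, C.e 1, C.e 2} : Finset (Finset α)).card = 3 :=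
    Finset.card_eq_three.mpr ⟨_, _, _, C.e_ne_e_succ 0, (C.e_add_ne (a := 0) two_pos hk).symm,
      C.e_ne_e_succ 1, rfl⟩
  have hout : ({w₀, p, w₂} : Finset (Finset α)).card = 3 :=
    Finset.card_eq_three.mpr ⟨_, _, _, hw₀p, hw₀w₂, hw₂p.symm, rfl⟩
  have hdisj : Disjoint ({w₀, p, w₂} : Finset (Finset α)) {C.e 0, C.e 1, C.e 2} := by
    simp only [Finset.disjoint_insert_left, Finset.disjoint_singleton_left, Finset.mem_insert,
      Finset.mem_singleton, not_or]
    exact ⟨⟨hw₀C 0, hw₀C 1, hw₀C 2⟩, ⟨hpC 0, hpC 1, hpC 2⟩, ⟨hw₂C 0, hw₂C 1, hw₂C 2⟩⟩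
  refine hasSmallFVS_of_peels {z₁, C.v 2} ({w₀, p, w₂} ∪ {C.e 0, C.e 1, C.e 2}) (fun _ => 0)
    ?_ ⟨w₀, by simp⟩ ?_ ?_ IH
  · intro g hg
    simp only [Finset.mem_union, Finset.mem_insert, Finset.mem_singleton] at hg
    rcases hg with (rfl | rfl | rfl) | (rfl | rfl | rfl) <;> first | assumption | exact C.e_mem _
  · rw [Finset.card_union_of_disjoint hdisj, hcyc, hout]
    have := Finset.card_insert_le z₁ {C.v 2}
    simp only [Finset.card_singleton] at this
    omega
  · intro f hf
    simp only [Finset.mem_union, Finset.mem_insert, Finset.mem_singleton] at hf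
    rcases hf with (rfl | rfl | rfl) | (rfl | rfl | rfl)
    · exact peels_of_mem hz₁w (by simp)
    · exact peels_of_mem hz₁p (by simp)
    · exact Or.inr (isPendantIn_of_partners survivors_subset (hu _ hw₂) ht₂w hz₃w hz₃t.symm
        (fun g hg hg' => (ht₂part g hg hg').symm) hz₃part
        (not_mem_survivors_of_mem (C.v_mem 2) (by simp))
        (not_mem_survivors_of_mem hz₁p (by simp)))
    · exact Or.inr (isPendantIn_of_partners survivors_subset (hu _ (C.e_mem 0)) (C.v_succ_mem 0)
        ht₀ ht₀v.symm (C.edges_of_v_succ hdeg 0) ht₀part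
        (not_mem_survivors_of_mem hv₂ (by simp)) (not_mem_survivors_of_mem hz₁w (by simp)))
    · exact peels_of_mem hv₂ (by simp)
    · exact peels_of_mem (C.v_mem 2) (by simp)

end PeriodicCycle

namespace ShortestCycle

variable {H : FinHypergraph α} {C : H.ShortestCycle} (hdeg : ∀ x, H.degree x ≤ 2)
include hdeg

lemma no_chord {a d : ℕ} (hd : 2 ≤ d) (hdk : d + 2 ≤ C.len) {x : α} (hxa : x ∈ C.e a)
    (hxd : x ∈ C.e (a + d)) : False := by
  have hxv : ∀ i, 1 ≤ i → i ≤ d → x ≠ C.v (a + i) := by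
    rintro i hi1 hid rfl
    have hp := C.edges_of_v_succ hdeg (a + (i - 1))
    rw [show a + (i - 1) + 1 = a + i by omega] at hp
    rcases hp _ (C.e_mem a) hxa with h | h
    · have := C.e_add_inj (a := a) (i := 0) (j := i - 1) (by omega) (by omega) (by simpa using h)
      rcases hp _ (C.e_mem (a + d)) hxd with h' | h'
      · have := C.e_add_inj (by omega) (by omega) h'
        omega
      · have := C.e_add_inj (by omega) (by omega) h'
        omega
    · have := C.e_add_inj (a := a) (i := 0) (j := i) (by omega) (by omega) (by simpa using h)
      omega
  obtain ⟨u, g, hc⟩ : ∃ u g, H.IsCycle (d + 1) u g := by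
    refine exists_isCycle_of_nat (by omega) (fun i => if i = 0 then x else C.v (a + i))
      (fun i => C.e (a + i)) ?_ (fun i _ j _ h => C.e_add_inj (by omega) (by omega) h)
      (fun i _ => C.e_mem _) ?_ (fun i _ => by simpa [← add_assoc] using C.v_succ_mem (a + i))
      (by simpa using hxd)
    · intro i hi j hj h
      by_cases hi0 : i = 0 <;> by_cases hj0 : j = 0 <;> simp only [hi0, hj0, ↓reduceIte] at h
      · omega
      · exact absurd h (hxv j (by omega) (by omega))
      · exact absurd h.symm (hxv i (by omega) (by omega))
      · exact C.v_add_inj (by omega) (by omega) h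
    · intro i _
      by_cases hi0 : i = 0
      · simpa [hi0] using hxa
      · simpa [hi0] using C.v_mem (a + i)
  exact C.not_isCycle _ (by omega) u g hc

lemma no_outer_chord {a d : ℕ} (hd : 1 ≤ d) (hdk : d + 3 ≤ C.len) {f : Finset α}
    (hf : f ∈ H.edges) (hfC : ∀ j, f ≠ C.e j) {y z : α} (hyf : y ∈ f) (hya : y ∈ C.e a)
    (hzf : z ∈ f) (hzd : z ∈ C.e (a + d)) : False := by
  have hyz : y ≠ z := by
    rintro rfl
    rcases eq_or_eq_of_degree_le_two (hdeg y) (C.e_mem a) hf hya hyf (hfC a).symm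
      (C.e_mem (a + d)) hzd with h | h
    · exact C.e_add_ne (by omega) (by omega) h
    · exact hfC _ h.symm
  have hv : ∀ {x} s, x ∈ f → x ≠ C.v s := fun s hx h => C.v_not_mem_outer hdeg hf hfC s (h ▸ hx)
  obtain ⟨u, g, hc⟩ : ∃ u g, H.IsCycle (d + 2) u g := by
    refine exists_isCycle_of_nat (by omega)
      (fun i => if i = 0 then y else if i ≤ d then C.v (a + i) else z)
      (fun i => if i ≤ d then C.e (a + i) else f) ?_ ?_ ?_ ?_ ?_ (by simpa using hyf)
    · intro i hi j hj h
      split_ifs at h <;> first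
        | omega
        | exact absurd h hyz
        | exact absurd h.symm hyz
        | exact absurd h (hv _ hyf)
        | exact absurd h.symm (hv _ hyf)
        | exact absurd h (hv _ hzf)
        | exact absurd h.symm (hv _ hzf)
        | exact C.v_add_inj (by omega) (by omega) h
    · intro i hi j hj h
      split_ifs at h <;> first
        | omega
        | exact absurd h.symm (hfC _)
        | exact absurd h (hfC _)
        | exact C.e_add_inj (by omega) (by omega) h
    · intro i _
      split_ifs
      exacts [C.e_mem _, hf]
    · intro i hi
      rcases Nat.eq_zero_or_pos i with rfl | hi0
      · simpa using hya
      by_cases hid : i ≤ d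
      · simpa [hi0.ne', hid] using C.v_mem (a + i)
      · simpa [hi0.ne', hid] using hzf
    · intro i hi
      by_cases hid : i + 1 ≤ d
      · simpa [hid, show i ≤ d by omega, ← add_assoc] using C.v_succ_mem (a + i)
      · obtain rfl : i = d := by omega
        simpa using hzd
  exact C.not_isCycle _ (by omega) u g hc

variable (hl : H.Linear)
include hl

lemma eq_v_of_mem_of_mem {a b : ℕ} {x : α} (hxa : x ∈ C.e a) (hxb : x ∈ C.e b)
    (hab : C.e a ≠ C.e b) : x = C.v a ∨ x = C.v (a + 1) := by
  obtain ⟨d, hdk, hb⟩ := C.exists_e_eq_e_add a b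
  rw [hb] at hxb hab
  have hd0 : d ≠ 0 := by rintro rfl; exact hab (by simp)
  by_cases hd1 : d = 1
  · subst hd1
    exact Or.inr (hl.eq_of_mem_of_mem (C.e_mem a) (C.e_mem (a + 1)) hab hxa hxb
      (C.v_succ_mem a) (C.v_mem (a + 1)))
  by_cases hdk1 : d = C.len - 1
  · subst hdk1
    have hv : C.v a ∈ C.e (a + (C.len - 1)) := by
      have := C.v_succ_mem (a + (C.len - 1))
      rwa [show a + (C.len - 1) + 1 = a + C.len by omega, C.v_add_len] at this
    exact Or.inl (hl.eq_of_mem_of_mem (C.e_mem a) (C.e_mem _) hab hxa hxb (C.v_mem a) hv)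
  exact (C.no_chord hdeg (a := a) (d := d) (by omega) (by omega) hxa hxb).elim

lemma len_eq_four_of_outer (hk : 4 ≤ C.len) {f : Finset α} (hf : f ∈ H.edges)
    (hfC : ∀ j, f ≠ C.e j) {a b : ℕ} {y z : α} (hyf : y ∈ f) (hya : y ∈ C.e a) (hzf : z ∈ f)
    (hzb : z ∈ C.e b) (hyz : y ≠ z) : C.len = 4 ∧ C.e b = C.e (a + 2) := by
  obtain ⟨d, hdk, hb⟩ := C.exists_e_eq_e_add a b
  rw [hb] at hzb ⊢
  rcases Nat.eq_zero_or_pos d with rfl | hd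
  · exact (hyz (hl.eq_of_mem_of_mem hf (C.e_mem a) (hfC a) hyf hya hzf (by simpa using hzb))).elim
  by_cases h3 : d + 3 ≤ C.len
  · exact (C.no_outer_chord hdeg hd h3 hf hfC hyf hya hzf hzb).elim
  by_cases h3' : 3 ≤ d
  · refine (C.no_outer_chord hdeg (a := a + d) (d := C.len - d) (by omega) (by omega) hf hfC
      hzf hzb hyf ?_).elim
    rwa [show a + d + (C.len - d) = a + C.len by omega, C.e_add_len]
  obtain rfl : d = 2 := by omega
  exact ⟨by omega, rfl⟩

lemma eq_of_mem_outer (hk : 5 ≤ C.len) {f : Finset α} (hf : f ∈ H.edges) (hfC : ∀ j, f ≠ C.e j)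
    {a b : ℕ} {y z : α} (hyf : y ∈ f) (hya : y ∈ C.e a) (hzf : z ∈ f) (hzb : z ∈ C.e b) :
    y = z := by
  by_contra hyz
  have := (C.len_eq_four_of_outer hdeg hl (by omega) hf hfC hyf hya hzf hzb hyz).1
  omega

variable (hu : H.TriUniform) (hcov : ∀ u ∈ H.edges, ∀ x ∈ u, ∃ g ∈ H.edges, x ∈ g ∧ g ≠ u)
include hu hcov

lemma exists_outer_edge (s : ℕ) :
    ∃ t w, t ∈ C.e s ∧ t ≠ C.v s ∧ t ≠ C.v (s + 1) ∧ w ∈ H.edges ∧ t ∈ w ∧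
      (∀ j, w ≠ C.e j) ∧ ∀ g ∈ H.edges, t ∈ g → g = C.e s ∨ g = w := by
  obtain ⟨t, hts, htv, htv', -⟩ := exists_third_of_card_eq_three (hu _ (C.e_mem s)) (C.v_mem s)
    (C.v_succ_mem s) (C.v_ne_v_succ s)
  obtain ⟨w, hw, htw, hws, hpart⟩ := exists_partner hdeg hcov (C.e_mem s) hts
  refine ⟨t, w, hts, htv, htv', hw, htw, fun j hj => ?_, hpart⟩
  subst hj
  rcases C.eq_v_of_mem_of_mem hdeg hl hts htw hws.symm with h | h
  exacts [htv h, htv' h]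

/-- On a cycle of length four, `w` may meet `e (s + 2)` as well; choosing `z` off `g = e (s + 2)`
keeps `p` off the cycle. -/
lemma exists_outer_step (hk : 4 ≤ C.len) {s : ℕ} {t : α} {w g : Finset α} (ht : t ∈ C.e s)
    (hw : w ∈ H.edges) (htw : t ∈ w) (hwC : ∀ j, w ≠ C.e j) (hg : g ∈ H.edges) (hwg : w ≠ g)
    (hg4 : C.len = 4 → g = C.e (s + 2)) :
    ∃ z p, z ∈ w ∧ z ≠ t ∧ p ∈ H.edges ∧ z ∈ p ∧ p ≠ w ∧ p ≠ g ∧ (∀ j, p ≠ C.e j) ∧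
      ∀ h ∈ H.edges, z ∈ h → h = w ∨ h = p := by
  obtain ⟨z, hzw, hzt, hzg⟩ := exists_mem_ne_not_mem hl hw hg hwg (hu w hw) htw
  obtain ⟨p, hp, hzp, hpw, hpart⟩ := exists_partner hdeg hcov hw hzw
  refine ⟨z, p, hzw, hzt, hp, hzp, hpw, by rintro rfl; exact hzg hzp, ?_, hpart⟩
  rintro j rfl
  obtain ⟨h4, h2⟩ := C.len_eq_four_of_outer hdeg hl hk hw hwC htw ht hzw hzp hzt.symm
  exact hzg (hg4 h4 ▸ h2 ▸ hzp)

theorem hasSmallFVS_of_len_eq_three_mul_add_one {r : ℕ} (hk : C.len = 3 * r + 1)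
    (IH : ∀ H' : FinHypergraph α, H'.edges ⊂ H.edges → H'.HasSmallFVS) : H.HasSmallFVS := by
  have hr : 1 ≤ r := by have := C.three_le_len hl; omega
  obtain ⟨t, w, ht, htv, -, hw, htw, hwC, htpart⟩ := C.exists_outer_edge hdeg hl hu hcov 0
  obtain ⟨z, p, hzw, -, hp, hzp, hpw, -, hpC, -⟩ := C.exists_outer_step hdeg hl hu hcov (by omega)
    ht hw htw hwC (C.e_mem 2) (hwC 2) (fun _ => rfl)
  refine C.hasSmallFVS_of_sweep hdeg hu hk {z} {w, p} (fun g => if g = C.e 1 then 1 else 0)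
    (by simp [Finset.insert_subset_iff, hw, hp]) (by simpa using ⟨hwC, hpC⟩)
    (by simpa using ⟨hzw, hzp⟩) (by simp [Finset.card_pair hpw.symm]) (fun j hj => ?_) IH
  obtain rfl | rfl : j = 0 ∨ j = 1 := by omega
  · exact Or.inr (isPendantIn_of_partners survivors_subset (hu _ (C.e_mem 0)) (C.v_mem 0) ht
      htv.symm (C.edges_of_v hdeg 0) htpart
      (not_mem_survivors_of_mem (C.v_mem _)
        (Finset.mem_union_right _ (C.v_mem_sweepSet_last hk hr)))
      (not_mem_survivors_of_mem hzw (by simp)))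
  · exact Or.inr (C.isPendantIn_e_succ hdeg hu survivors_subset 0
      (not_mem_survivors_of_lt (by simp [C.e_mem_edgeFinset]) (by simp [C.e_ne_e_succ 0]))
      (not_mem_survivors_of_mem (C.v_succ_mem 2)
        (Finset.mem_union_right _ (C.v_mem_sweepSet_first hr))))

theorem hasSmallFVS_of_len_eq_three_mul_add_two {r : ℕ} (hk : C.len = 3 * r + 2)
    (IH : ∀ H' : FinHypergraph α, H'.edges ⊂ H.edges → H'.HasSmallFVS) : H.HasSmallFVS := by
  have hr : 1 ≤ r := by have := C.three_le_len hl; omega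
  obtain ⟨t₀, w₀, ht₀, ht₀v, ht₀v', hw₀, ht₀w, hw₀C, ht₀part⟩ :=
    C.exists_outer_edge hdeg hl hu hcov 0
  obtain ⟨t₂, w₂, ht₂, -, ht₂v, hw₂, ht₂w, hw₂C, ht₂part⟩ := C.exists_outer_edge hdeg hl hu hcov 2
  have hw₀₂ : w₀ ≠ w₂ := by
    rintro rfl
    obtain rfl := C.eq_of_mem_outer hdeg hl (by omega) hw₀ hw₀C ht₀w ht₀ ht₂w ht₂
    rcases ht₀part _ (C.e_mem 2) ht₂ with h | h
    · exact C.e_add_ne (a := 0) two_pos (by omega) (by simpa using h)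
    · exact hw₀C 2 h.symm
  have hk4 : C.len = 4 → False := by omega
  obtain ⟨z₁, p₁, hz₁w, -, hp₁, hz₁p, hp₁w, hp₁w₂, hp₁C, -⟩ :=
    C.exists_outer_step hdeg hl hu hcov (by omega) ht₀ hw₀ ht₀w hw₀C hw₂ hw₀₂ (absurd · hk4)
  obtain ⟨z₃, p₃, hz₃w, hz₃t, hp₃, hz₃p, hp₃w, hp₃w₀, hp₃C, hz₃part⟩ :=
    C.exists_outer_step hdeg hl hu hcov (by omega) ht₂ hw₂ ht₂w hw₂C hw₀ hw₀₂.symm (absurd · hk4)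
  by_cases hp : p₁ = p₃
  · subst hp
    exact C.hasSmallFVS_of_hexagon hdeg hu (C.three_le_len hl) hw₀ hw₂ hp₁ hw₀C hw₂C hp₁C
      hp₁w.symm hp₃w.symm hw₀₂ ht₀ ht₀v' ht₀part ht₂w ht₂part hz₁w hz₁p hz₃w hz₃t hz₃part IH
  have hO : ({w₀, p₁, w₂, p₃} : Finset (Finset α)).card = 4 :=
    Finset.card_eq_four.mpr ⟨_, _, _, _, hp₁w.symm, hw₀₂, hp₃w₀.symm, hp₁w₂, hp, hp₃w.symm, rfl⟩
  refine C.hasSmallFVS_of_sweep hdeg hu hk {z₁, z₃} {w₀, p₁, w₂, p₃}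
    (fun g => if g = C.e 1 then 1 else 0) (by simp [Finset.insert_subset_iff, *])
    (by simpa using ⟨hw₀C, hp₁C, hw₂C, hp₃C⟩) (fun g hg => by
      simp only [Finset.mem_insert, Finset.mem_singleton] at hg
      rcases hg with rfl | rfl | rfl | rfl
      exacts [⟨z₁, hz₁w, by simp⟩, ⟨z₁, hz₁p, by simp⟩, ⟨z₃, hz₃w, by simp⟩, ⟨z₃, hz₃p, by simp⟩])
    (by have := Finset.card_le_two (a := z₁) (b := z₃); omega) (fun j hj => ?_) IH
  obtain rfl | rfl | rfl : j = 0 ∨ j = 1 ∨ j = 2 := by omega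
  · exact Or.inr (isPendantIn_of_partners survivors_subset (hu _ (C.e_mem 0)) (C.v_mem 0) ht₀
      ht₀v.symm (C.edges_of_v hdeg 0) ht₀part
      (not_mem_survivors_of_mem (C.v_mem _)
        (Finset.mem_union_right _ (C.v_mem_sweepSet_last hk hr)))
      (not_mem_survivors_of_mem hz₁w (by simp)))
  · exact Or.inr (C.isPendantIn_e_succ hdeg hu survivors_subset 0
      (not_mem_survivors_of_lt (by simp [C.e_mem_edgeFinset]) (by simp [C.e_ne_e_succ 0]))
      (not_mem_survivors_of_lt (by simp [C.e_mem_edgeFinset]) (by simp [(C.e_ne_e_succ 1).symm])))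
  · exact Or.inr (isPendantIn_of_partners survivors_subset (hu _ (C.e_mem 2)) (C.v_succ_mem 2)
      ht₂ ht₂v.symm (C.edges_of_v_succ hdeg 2) ht₂part
      (not_mem_survivors_of_mem (C.v_succ_mem 3)
        (Finset.mem_union_right _ (C.v_mem_sweepSet_first hr)))
      (not_mem_survivors_of_mem hz₃w (by simp)))

end ShortestCycle

theorem hasSmallFVS_of_two_regular {H : FinHypergraph α} (hu : H.TriUniform) (hl : H.Linear)
    (hdeg : ∀ x, H.degree x ≤ 2) (hcov : ∀ u ∈ H.edges, ∀ x ∈ u, ∃ g ∈ H.edges, x ∈ g ∧ g ≠ u)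
    (hcyc : H.HasCycle)
    (IH : ∀ H' : FinHypergraph α, H'.edges ⊂ H.edges → H'.HasSmallFVS) : H.HasSmallFVS := by
  obtain ⟨C⟩ := ShortestCycle.nonempty hcyc
  obtain ⟨r, hr | hr | hr⟩ : ∃ r, C.len = 3 * r ∨ C.len = 3 * r + 1 ∨ C.len = 3 * r + 2 :=
    ⟨C.len / 3, by omega⟩
  · exact C.hasSmallFVS_of_len_eq_three_mul hdeg hu hr IH
  · exact C.hasSmallFVS_of_len_eq_three_mul_add_one hdeg hl hu hcov hr IH
  · exact C.hasSmallFVS_of_len_eq_three_mul_add_two hdeg hl hu hcov hr IH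

theorem hasSmallFVS {H : FinHypergraph α} (hu : H.TriUniform) (hl : H.Linear) :
    H.HasSmallFVS := by
  induction h : H.edges.card using Nat.strong_induction_on generalizing H with
  | _ n ih =>
  have IH : ∀ H' : FinHypergraph α, H'.edges ⊂ H.edges → H'.HasSmallFVS := fun H' hH' =>
    ih _ (h ▸ Finset.card_lt_card hH') (hu.anti hH'.subset) (hl.anti hH'.subset) rfl
  by_cases hcyc : H.HasCycle
  swap
  · exact ⟨∅, fun hc => hcyc (hc.mono (delV_edges_subset ∅)), by simp⟩
  by_cases h3 : ∃ v, 3 ≤ H.degree v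
  · obtain ⟨v, hv⟩ := h3
    exact hasSmallFVS_of_three_le_degree hv IH
  have hdeg : ∀ x, H.degree x ≤ 2 := fun x => by push Not at h3; exact Nat.le_of_lt_succ (h3 x)
  by_cases hp : ∃ f ∈ H.edges, IsPendantIn H.edges f
  · obtain ⟨f, hf, hpf⟩ := hp
    exact hasSmallFVS_of_isPendantIn hf hpf IH
  push Not at hp
  by_cases h1 : ∃ u ∈ H.edges, ∃ x ∈ u, ∀ g ∈ H.edges, x ∈ g → g = u
  · obtain ⟨u, huE, x, hx, hxu⟩ := h1
    exact hasSmallFVS_of_unique_edge hu hl hdeg hp huE hx hxu IH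
  push Not at h1
  exact hasSmallFVS_of_two_regular hu hl hdeg h1 hcyc IH

end FinHypergraph

open FinHypergraph in
/-- linear 3-uniform ⇒ τ_c(H) ≤ m/3. -/
theorem fvs_le_third {α : Type*} [DecidableEq α] (H : FinHypergraph α)
    (hu : H.TriUniform) (hl : H.Linear) :
    3 * H.fvsNum ≤ H.edges.card := by
  obtain ⟨S, hS, hSc⟩ := hasSmallFVS hu hl
  have hfvs : H.IsFVS (S ∩ H.verts) := by
    refine ⟨Finset.inter_subset_right, fun hc => hS (hc.mono fun g hg => ?_)⟩
    rw [mem_delV_edges] at hg ⊢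
    exact ⟨hg.1, fun x hx hxS => hg.2 x hx (Finset.mem_inter.mpr ⟨hxS, H.mem_verts g hg.1 x hx⟩)⟩
  have := Nat.sInf_le (s := {n | ∃ S, H.IsFVS S ∧ S.card = n}) ⟨_, hfvs, rfl⟩
  have := Finset.card_le_card (Finset.inter_subset_left (s₁ := S) (s₂ := H.verts))
  unfold fvsNum
  omega
end

section
/- Let H=(V,E) be a 3-uniform hypergraph with n vertices, m edges, and p connected components. Then the minimum cardinality of a feedback edge set of H is at most 2m − n + p. -/
/-! Deleting an edge `f` can only split the component containing it, into pieces that each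
meet `f`; so it adds at most `|f| - 1` components, and at most `|f| - 2` when `f` lies on a cycle,
since two of its vertices stay joined along the rest of the cycle. Delete edges one at a time: an
edge of a cycle while there is one, which costs one edge of the feedback set and one new component,
and an arbitrary edge once the hypergraph is acyclic, which costs nothing in the feedback set and at
most two new components. Either way `τ_c' + n - p` changes by at most `2` per deleted edge. -/

lemma Nat.card_quot_add_one_le {β : Type*} [Finite β] {r r' : β → β → Prop} (hr : Equivalence r)
    (hle : ∀ x y, r' x y → r x y) {T : Finset β} (hT : T.Nonempty)
    (hsplit : ∀ x y, r x y → r' x y ∨ (∃ a ∈ T, r' x a) ∧ ∃ b ∈ T, r' y b) :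
    Nat.card (Quot r') + 1 ≤ Nat.card (Quot r) + T.card := by
  classical
  have := Fintype.ofFinite β
  have := Fintype.ofFinite (Quot r)
  have := Fintype.ofFinite (Quot r')
  obtain ⟨t, ht⟩ := hT
  set S := T.image (Quot.mk r')
  have hS : ∀ x, (∃ a ∈ T, r' x a) → Quot.mk r' x ∈ S := fun x ⟨a, ha, hxa⟩ =>
    Quot.sound hxa ▸ Finset.mem_image_of_mem _ ha
  have hinj : Set.InjOn (Quot.mapRight hle) ↑(insert (Quot.mk r' t) Sᶜ) := by
    rintro ⟨x⟩ hx ⟨y⟩ hy hxy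
    rcases hsplit x y (hr.eqvGen_iff.mp (Quot.eqvGen_exact hxy)) with h | ⟨hxT, hyT⟩
    · exact Quot.sound h
    · simp only [Finset.coe_insert, Finset.coe_compl, Set.mem_insert_iff, Set.mem_compl_iff,
        Finset.mem_coe] at hx hy
      rw [hx.resolve_right (not_not.mpr (hS x hxT)), hy.resolve_right (not_not.mpr (hS y hyT))]
  have hcard :=
    Finset.card_le_card_of_injOn _ (t := Finset.univ) (fun _ _ => Finset.mem_univ _) hinj
  rw [Finset.card_insert_of_notMem (by simpa [S] using ⟨t, ht, rfl⟩), Finset.card_compl,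
    Finset.card_univ] at hcard
  have : S.card ≤ T.card := Finset.card_image_le
  simp only [Nat.card_eq_fintype_card]
  omega

namespace FinHypergraph

variable {α : Type*} {H : FinHypergraph α}

lemma hasCycle_of_edges_subset {H₁ H₂ : FinHypergraph α} (h : H₁.edges ⊆ H₂.edges)
    (hc : H₁.HasCycle) : H₂.HasCycle :=
  let ⟨k, v, e, hk, hv, he, hmem, hinc⟩ := hc
  ⟨k, v, e, hk, hv, he, fun i => h (hmem i), hinc⟩

lemma connRel_equivalence (H : FinHypergraph α) : Equivalence H.connRel :=
  have : Std.Symm fun a b => ∃ e ∈ H.edges, a ∈ e ∧ b ∈ e :=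
    ⟨fun _ _ ⟨e, he, ha, hb⟩ => ⟨e, he, hb, ha⟩⟩
  ⟨fun _ => .refl, fun h => Relation.ReflTransGen.stdSymm.symm _ _ h, .trans⟩

lemma card_verts_le_numComponents_of_edges_eq_empty (h : H.edges = ∅) :
    H.verts.card ≤ H.numComponents := by
  have hinj : Function.Injective (Quot.mk fun x y : {a // a ∈ H.verts} => H.connRel x y) :=
    fun x y hxy => Subtype.ext <| Eq.symm <| (Relation.reflTransGen_iff_eq (by simp [h])).mp <|
      ((H.connRel_equivalence.comap Subtype.val).eqvGen_iff).mp (Quot.eqvGen_exact hxy)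
  simpa [numComponents] using Nat.card_le_card_of_injective _ hinj

variable [DecidableEq α]

@[simp] lemma verts_delE (H : FinHypergraph α) (A : Finset (Finset α)) :
    (H.delE A).verts = H.verts := rfl

@[simp] lemma edges_delE (H : FinHypergraph α) (A : Finset (Finset α)) :
    (H.delE A).edges = H.edges \ A := rfl

lemma card_edges_delE_singleton_add_one {f : Finset α} (hf : f ∈ H.edges) :
    (H.delE {f}).edges.card + 1 = H.edges.card := by
  rw [edges_delE, Finset.sdiff_singleton_eq_erase, Finset.card_erase_add_one hf]

lemma TriUniform.delE (hu : H.TriUniform) (A : Finset (Finset α)) : (H.delE A).TriUniform :=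
  fun e he => hu e (Finset.mem_sdiff.mp he).1

lemma fesNum_le_card {A : Finset (Finset α)} (h : H.IsFES A) : H.fesNum ≤ A.card :=
  Nat.sInf_le ⟨A, h, rfl⟩

lemma isFES_edges (H : FinHypergraph α) : H.IsFES H.edges :=
  ⟨subset_rfl, fun ⟨_, _, _, _, _, _, hmem, _⟩ => by simpa using hmem 0⟩

lemma fesNum_le_card_edges (H : FinHypergraph α) : H.fesNum ≤ H.edges.card :=
  fesNum_le_card H.isFES_edges

lemma fesNum_eq_zero_of_not_hasCycle (h : ¬ H.HasCycle) : H.fesNum = 0 :=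
  Nat.eq_zero_of_le_zero <| fesNum_le_card (A := ∅)
    ⟨Finset.empty_subset _, fun hc => h (hasCycle_of_edges_subset (by simp) hc)⟩

lemma fesNum_le_fesNum_delE_add_one {f : Finset α} (hf : f ∈ H.edges) :
    H.fesNum ≤ (H.delE {f}).fesNum + 1 := by
  obtain ⟨A, ⟨hAsub, hAcyc⟩, hAcard⟩ := Nat.sInf_mem
    (⟨_, _, (H.delE {f}).isFES_edges, rfl⟩ : {n | ∃ A, (H.delE {f}).IsFES A ∧ A.card = n}.Nonempty)
  have hfes : H.IsFES (insert f A) := by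
    refine ⟨Finset.insert_subset hf (hAsub.trans Finset.sdiff_subset), fun hc => hAcyc ?_⟩
    refine hasCycle_of_edges_subset (fun g hg => ?_) hc
    simp only [edges_delE, Finset.mem_sdiff, Finset.mem_insert, Finset.mem_singleton] at hg ⊢
    tauto
  calc H.fesNum ≤ (insert f A).card := fesNum_le_card hfes
    _ ≤ A.card + 1 := Finset.card_insert_le _ _
    _ = (H.delE {f}).fesNum + 1 := by rw [hAcard]; rfl

lemma connRel_of_connRel_delE {A : Finset (Finset α)} {x y : α} (h : (H.delE A).connRel x y) :
    H.connRel x y :=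
  Relation.ReflTransGen.mono
    (fun _ _ ⟨e, he, ha, hb⟩ => ⟨e, (Finset.mem_sdiff.mp he).1, ha, hb⟩) _ _ h

lemma connRel_delE_singleton_or {f : Finset α} {x y : α} (h : H.connRel x y) :
    (H.delE {f}).connRel x y ∨
      (∃ s ∈ f, (H.delE {f}).connRel x s) ∧ ∃ s ∈ f, (H.delE {f}).connRel y s := by
  induction h with
  | refl => exact .inl .refl
  | @tail b c _ hbc ih =>
    obtain ⟨e, he, hb, hc⟩ := hbc
    by_cases hef : e = f
    · subst hef
      refine .inr ⟨?_, c, hc, .refl⟩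
      rcases ih with hxb | ⟨hx, -⟩
      exacts [⟨b, hb, hxb⟩, hx]
    · have hbc : (H.delE {f}).connRel b c := .single ⟨e, by simp [he, hef], hb, hc⟩
      rcases ih with hxb | ⟨hx, s, hs, hbs⟩
      · exact .inl (hxb.trans hbc)
      · exact .inr ⟨hx, s, hs, ((H.delE {f}).connRel_equivalence.symm hbc).trans hbs⟩

lemma numComponents_delE_add_one_le {f : Finset α} (hf : f ∈ H.edges) {T : Finset α}
    (hTf : T ⊆ f) (hT : T.Nonempty) (hcover : ∀ s ∈ f, ∃ t ∈ T, (H.delE {f}).connRel s t) :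
    (H.delE {f}).numComponents + 1 ≤ H.numComponents + T.card := by
  have hTverts : ∀ t ∈ T, t ∈ H.verts := fun t ht => H.mem_verts f hf t (hTf ht)
  obtain ⟨t, ht⟩ := hT
  calc (H.delE {f}).numComponents + 1
      ≤ H.numComponents + (T.subtype (· ∈ H.verts)).card := by
        refine Nat.card_quot_add_one_le (H.connRel_equivalence.comap Subtype.val)
          (fun _ _ => connRel_of_connRel_delE) ⟨⟨t, hTverts t ht⟩, Finset.mem_subtype.mpr ht⟩ ?_
        rintro ⟨x, _⟩ ⟨y, _⟩ hxy
        refine (connRel_delE_singleton_or hxy).imp_right fun ⟨⟨a, ha, hxa⟩, b, hb, hyb⟩ => ?_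
        obtain ⟨a', ha', hxa'⟩ := hcover a ha
        obtain ⟨b', hb', hyb'⟩ := hcover b hb
        exact ⟨⟨⟨a', hTverts a' ha'⟩, Finset.mem_subtype.mpr ha', hxa.trans hxa'⟩,
          ⟨⟨b', hTverts b' hb'⟩, Finset.mem_subtype.mpr hb', hyb.trans hyb'⟩⟩
    _ ≤ H.numComponents + T.card := by
        rw [Finset.card_subtype]
        exact Nat.add_le_add_left (Finset.card_filter_le _ _) _

lemma IsCycle.connRel_delE {k : ℕ} {v : ZMod k → α} {e : ZMod k → Finset α}
    (hc : H.IsCycle k v e) : (H.delE {e 0}).connRel (v 1) (v 0) := by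
  obtain ⟨hk, -, he, hmem, hinc⟩ := hc
  have hne : ∀ i : ℕ, 1 ≤ i → i < k → e i ≠ e 0 := fun i hi hik hei =>
    (ZMod.natCast_eq_zero_iff i k).not.mpr (Nat.not_dvd_of_pos_of_lt hi hik) (he hei)
  have hpath : Relation.ReflTransGen
      (fun i j : ℕ => ∃ g ∈ (H.delE {e 0}).edges, v i ∈ g ∧ v j ∈ g) 1 k := by
    refine reflTransGen_of_succ_of_le _ (fun i ⟨hi, hik⟩ => ?_) (by omega)
    refine ⟨e i, by simp [hmem, hne i hi hik], (hinc i).1, ?_⟩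
    simpa using (hinc i).2
  have := Relation.ReflTransGen.lift (p := fun a b => ∃ g ∈ (H.delE {e 0}).edges, a ∈ g ∧ b ∈ g)
    (fun i : ℕ => v i) (fun _ _ h => h) _ _ hpath
  rwa [Function.onFun, Nat.cast_one, ZMod.natCast_self] at this

lemma IsCycle.numComponents_delE_add_two_le {k : ℕ} {v : ZMod k → α} {e : ZMod k → Finset α}
    (hc : H.IsCycle k v e) : (H.delE {e 0}).numComponents + 2 ≤ H.numComponents + (e 0).card := by
  have hpath := hc.connRel_delE
  obtain ⟨hk, hv, -, hmem, hinc⟩ := hc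
  have : Fact (1 < k) := ⟨hk⟩
  have hv0 : v 0 ∈ e 0 := (hinc 0).1
  have hv1 : v 1 ∈ e 0 := by simpa using (hinc 0).2
  have hv01 : v 0 ≠ v 1 := hv.ne zero_ne_one
  have hbound := numComponents_delE_add_one_le (hmem 0) (Finset.erase_subset (v 1) (e 0))
    ⟨v 0, Finset.mem_erase.mpr ⟨hv01, hv0⟩⟩ fun s hs => ?_
  · rw [Finset.card_erase_of_mem hv1] at hbound
    have := Finset.card_pos.mpr ⟨_, hv0⟩
    omega
  · by_cases hs1 : s = v 1
    · exact ⟨v 0, Finset.mem_erase.mpr ⟨hv01, hv0⟩, hs1 ▸ hpath⟩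
    · exact ⟨s, Finset.mem_erase.mpr ⟨hs1, hs⟩, .refl⟩

lemma exists_fesNum_add_numComponents_delE_le (hu : H.TriUniform) (hne : H.edges.Nonempty) :
    ∃ f ∈ H.edges,
      H.fesNum + (H.delE {f}).numComponents ≤ (H.delE {f}).fesNum + H.numComponents + 2 := by
  by_cases hcyc : H.HasCycle
  · obtain ⟨k, v, e, hc⟩ := hcyc
    have hf := hc.2.2.2.1 0
    have := fesNum_le_fesNum_delE_add_one hf
    have := hc.numComponents_delE_add_two_le
    refine ⟨e 0, hf, ?_⟩
    rw [hu _ hf] at *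
    omega
  · obtain ⟨f, hf⟩ := hne
    have := numComponents_delE_add_one_le hf subset_rfl (Finset.card_pos.mp (hu f hf ▸ three_pos))
      fun s hs => ⟨s, hs, .refl⟩
    refine ⟨f, hf, ?_⟩
    rw [fesNum_eq_zero_of_not_hasCycle hcyc, hu f hf] at *
    omega

theorem fesNum_add_card_verts_le (hu : H.TriUniform) :
    H.fesNum + H.verts.card ≤ 2 * H.edges.card + H.numComponents := by
  induction hm : H.edges.card generalizing H with
  | zero =>
    have he := Finset.card_eq_zero.mp hm
    have := H.fesNum_le_card_edges
    have := card_verts_le_numComponents_of_edges_eq_empty he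
    omega
  | succ m ih =>
    obtain ⟨f, hf, hstep⟩ :=
      exists_fesNum_add_numComponents_delE_le hu (Finset.card_pos.mp (by omega))
    have hcard := card_edges_delE_singleton_add_one hf
    have hdel := ih (hu.delE {f}) (by omega)
    rw [verts_delE] at hdel
    omega

end FinHypergraph

open FinHypergraph in
/-- 3-uniform ⇒ τ_c'(H) ≤ 2m - n + p. -/
theorem fes_le {α : Type*} [DecidableEq α] (H : FinHypergraph α)
    (hu : H.TriUniform) :
    (H.fesNum : ℤ) ≤ 2 * H.edges.card - H.verts.card + H.numComponents := by
  have := fesNum_add_card_verts_le hu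
  omega
end

section
/- Let H be a 3-uniform hypergraph with m edges such that τ_c(H) = m/2. Then every vertex of H has degree at most 2. -/
/-! Deleting a vertex that lies on a cycle destroys the two cycle edges through it, so induction on
the number of edges gives `2 τ_c(H) ≤ m` for every hypergraph. Applying this bound to `H - v`
instead gives `2 τ_c(H) ≤ 2 (τ_c(H - v) + 1) ≤ m - deg v + 2`, which is `< m` once `deg v ≥ 3`. -/

namespace FinHypergraph

variable {α : Type*}

lemma HasCycle.mono_s16 {H₁ H₂ : FinHypergraph α} (h : H₁.edges ⊆ H₂.edges) :
    H₁.HasCycle → H₂.HasCycle := by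
  rintro ⟨k, v, e, hk, hv, he, hed, hinc⟩
  exact ⟨k, v, e, hk, hv, he, fun i => h (hed i), hinc⟩

variable [DecidableEq α] {H : FinHypergraph α}

lemma edges_delV_delV (H : FinHypergraph α) (S T : Finset α) :
    ((H.delV S).delV T).edges = (H.delV (S ∪ T)).edges := by
  ext e
  simp only [delV, Finset.mem_filter, Finset.mem_union, not_or]
  grind

lemma mem_verts_of_degree_pos {v : α} (h : 0 < H.degree v) : v ∈ H.verts := by
  obtain ⟨e, he⟩ := Finset.card_pos.mp h
  rw [Finset.mem_filter] at he
  exact H.mem_verts e he.1 v he.2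

lemma card_edges_delV_singleton_add_degree (H : FinHypergraph α) (v : α) :
    (H.delV {v}).edges.card + H.degree v = H.edges.card := by
  have hfilter : (H.delV {v}).edges = H.edges.filter (fun e => v ∉ e) := by
    ext e
    simp only [delV, Finset.mem_filter, Finset.mem_singleton]
    grind
  rw [hfilter, degree, add_comm]
  exact Finset.card_filter_add_card_filter_not _

lemma IsCycle.two_le_degree {k : ℕ} {v : ZMod k → α} {e : ZMod k → Finset α}
    (hc : H.IsCycle k v e) (i : ZMod k) : 2 ≤ H.degree (v i) := by
  obtain ⟨hk, -, he, hed, hinc⟩ := hc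
  have : Fact (1 < k) := ⟨hk⟩
  have hne : e (i - 1) ≠ e i := he.ne (by simp)
  have hsub : {e (i - 1), e i} ⊆ H.edges.filter (fun f => v i ∈ f) := by
    intro f hf
    rcases Finset.mem_insert.mp hf with rfl | hf
    · exact Finset.mem_filter.mpr ⟨hed _, by simpa using (hinc (i - 1)).2⟩
    · rw [Finset.mem_singleton.mp hf]
      exact Finset.mem_filter.mpr ⟨hed _, (hinc i).1⟩
  simpa [degree, Finset.card_pair hne] using Finset.card_le_card hsub

lemma isFVS_verts (H : FinHypergraph α) : H.IsFVS H.verts := by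
  refine ⟨subset_rfl, ?_⟩
  rintro ⟨k, v, e, -, -, -, hed, hinc⟩
  have h0 := Finset.mem_filter.mp (hed 0)
  exact h0.2 (v 0) (hinc 0).1 (H.mem_verts _ h0.1 _ (hinc 0).1)

lemma isFVS_empty (h : ¬ H.HasCycle) : H.IsFVS ∅ :=
  ⟨Finset.empty_subset _, fun hc => h (hc.mono_s16 (Finset.filter_subset _ _))⟩

lemma fvsNum_le {S : Finset α} (h : H.IsFVS S) : H.fvsNum ≤ S.card :=
  Nat.sInf_le ⟨S, h, rfl⟩

lemma exists_isFVS_card_eq_fvsNum (H : FinHypergraph α) :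
    ∃ S, H.IsFVS S ∧ S.card = H.fvsNum :=
  Nat.sInf_mem (s := {n | ∃ S, H.IsFVS S ∧ S.card = n}) ⟨_, H.verts, H.isFVS_verts, rfl⟩

lemma fvsNum_le_fvsNum_delV_add_card {S : Finset α} (hS : S ⊆ H.verts) :
    H.fvsNum ≤ (H.delV S).fvsNum + S.card := by
  obtain ⟨T, ⟨hT, hacyc⟩, hTcard⟩ := (H.delV S).exists_isFVS_card_eq_fvsNum
  have hST : H.IsFVS (S ∪ T) :=
    ⟨Finset.union_subset hS (hT.trans Finset.sdiff_subset),
      fun hc => hacyc (hc.mono_s16 (H.edges_delV_delV S T).ge)⟩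
  calc H.fvsNum ≤ (S ∪ T).card := fvsNum_le hST
    _ ≤ S.card + T.card := Finset.card_union_le S T
    _ = (H.delV S).fvsNum + S.card := by omega

lemma two_mul_fvsNum_add_degree_le_of_delV {v : α} (hv : v ∈ H.verts)
    (h : 2 * (H.delV {v}).fvsNum ≤ (H.delV {v}).edges.card) :
    2 * H.fvsNum + H.degree v ≤ H.edges.card + 2 := by
  have hdel := fvsNum_le_fvsNum_delV_add_card (Finset.singleton_subset_iff.mpr hv)
  have hcard := H.card_edges_delV_singleton_add_degree v
  rw [Finset.card_singleton] at hdel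
  omega

theorem two_mul_fvsNum_le_card_edges (H : FinHypergraph α) : 2 * H.fvsNum ≤ H.edges.card := by
  induction hm : H.edges.card using Nat.strong_induction_on generalizing H with
  | _ m ih =>
    by_cases hc : H.HasCycle
    · obtain ⟨k, v, e, hcyc⟩ := hc
      have hdeg := hcyc.two_le_degree 0
      have hv := mem_verts_of_degree_pos (by omega : 0 < H.degree (v 0))
      have hcard := H.card_edges_delV_singleton_add_degree (v 0)
      have := two_mul_fvsNum_add_degree_le_of_delV hv (ih _ (by omega) _ rfl)
      omega
    · have := fvsNum_le (isFVS_empty hc)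
      simp only [Finset.card_empty] at this
      omega

theorem two_mul_fvsNum_add_degree_le (H : FinHypergraph α) (v : α) :
    2 * H.fvsNum + H.degree v ≤ H.edges.card + 2 := by
  rcases Nat.eq_zero_or_pos (H.degree v) with h0 | hpos
  · have := H.two_mul_fvsNum_le_card_edges
    omega
  · exact two_mul_fvsNum_add_degree_le_of_delV (mem_verts_of_degree_pos hpos)
      (H.delV {v}).two_mul_fvsNum_le_card_edges

end FinHypergraph

open FinHypergraph in
theorem degree_le_two_of_fvs_eq_half_general {α : Type*} [DecidableEq α]
    (H : FinHypergraph α)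
    (heq : 2 * H.fvsNum = H.edges.card) :
    ∀ v, H.degree v ≤ 2 := by
  intro v
  have := H.two_mul_fvsNum_add_degree_le v
  omega

open FinHypergraph in
/-- 3-uniform with τ_c(H) = m/2 ⇒ max degree ≤ 2. -/
theorem degree_le_two_of_fvs_eq_half {α : Type*} [DecidableEq α]
    (H : FinHypergraph α) (hu : H.TriUniform)
    (heq : 2 * H.fvsNum = H.edges.card) :
    ∀ v, H.degree v ≤ 2 :=
  degree_le_two_of_fvs_eq_half_general H heq
end
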